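/- arXiv:2309.01997 — 2 statements merged into one kernel-verified Lean document; each statement's English description precedes it below -/
import Mathlib

section
/- Let A be a finite alphabet and k a positive integer. If X ⊆ A* is a regular language, then the set ⟮F_k minus the diagonal⟯(X) = {w' ∈ A* : ∃ w ∈ X, w ≠ w' and d_F(w,w') ≤ k} is a regular language over A. -/
open scoped ENNReal

/-- Length of a longest common prefix of `w` and `w'`. -/
noncomputable def lcpLen {A : Type*} (w w' : List A) : ℕ :=
  sSup {n | ∃ p : List A, p.length = n ∧ p <+: w ∧ p <+: w'}

/-- The prefix distance `d_P(w,w') = |w| + |w'| - 2|w ∧ w'|`. -/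
noncomputable def dP {A : Type*} (w w' : List A) : ℕ :=
  w.length + w'.length - 2 * lcpLen w w'

/-- Length of a longest common suffix of `w` and `w'`. -/
noncomputable def lcsLen {A : Type*} (w w' : List A) : ℕ :=
  sSup {n | ∃ s : List A, s.length = n ∧ s <:+ w ∧ s <:+ w'}

/-- The suffix distance `d_S(w,w') = |w| + |w'| - 2|s|`. -/
noncomputable def dS {A : Type*} (w w' : List A) : ℕ :=
  w.length + w'.length - 2 * lcsLen w w'

/-- Length of a longest common factor of `w` and `w'`. -/
noncomputable def lcfLen {A : Type*} (w w' : List A) : ℕ :=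
  sSup {n | ∃ f : List A, f.length = n ∧ f <:+: w ∧ f <:+: w'}

/-- The factor distance `d_F(w,w') = |w| + |w'| - 2|f|`,
`f` a maximum-length common factor. -/
noncomputable def dF {A : Type*} (w w' : List A) : ℕ :=
  w.length + w'.length - 2 * lcfLen w w'

/-- `n`-fold composition of a binary relation. -/
def relPow {α : Type*} (r : α → α → Prop) : ℕ → α → α → Prop
  | 0 => Eq
  | n + 1 => Relation.Comp (relPow r n) r

/-- `X` is a (variable-length) code: every word of `X*` factorizes uniquely over `X`. -/
def IsCode {A : Type*} (X : Set (List A)) : Prop :=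
  ∀ l m : List (List A), (∀ x ∈ l, x ∈ X) → (∀ x ∈ m, x ∈ X) →
    l.flatten = m.flatten → l = m

/-- `X` is complete: every word is a factor of some word of `X*`. -/
def IsCompleteSet {A : Type*} (X : Set (List A)) : Prop :=
  ∀ w : List A, ∃ l : List (List A), (∀ x ∈ l, x ∈ X) ∧ w <:+: l.flatten

/-- `X ⊆ A*` is a regular language: accepted by a finite deterministic automaton. -/
def IsRegularLang {A : Type*} (X : Set (List A)) : Prop :=
  ∃ (Q : Type) (_ : Fintype Q) (M : DFA A Q), M.accepts = X

/-- The uniform Bernoulli measure `μ(X) = Σ_{x ∈ X} |A|^{-|x|}`. -/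
noncomputable def mu (A : Type*) [Fintype A] (X : Set (List A)) : ℝ≥0∞ :=
  ∑' x : X, ((Fintype.card A : ℝ≥0∞))⁻¹ ^ (x : List A).length

/-!
Let `f` be a longest common factor of `w = u f v` and `w' = u' f v'`; then `dF w w' ≤ k` says
`|u| + |v| + |u'| + |v'| ≤ k`. So the language is the finite union, over such contexts, of
`u' ({f | u f v ∈ X} \ {f | u f v = u' f v'}) v'`. Two-sided quotients, differences and
concatenation with fixed words preserve regularity, so everything rests on the regularity of
`{f | u f v = u' f v'}`. After cancelling a common prefix this is `E = {f | f v = t f v'}`, and for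
`t ≠ []` the left quotient of `E` by `t` is `E` itself, while a word of length at least `|t|` that
does not start with `t` has empty quotient; hence `E` has finitely many left quotients and is
regular by Myhill–Nerode.
-/

section

variable {α : Type*}

namespace IsRegularLang

theorem empty : IsRegularLang (∅ : Set (List α)) :=
  ⟨Unit, inferInstance, ⟨fun _ _ => (), (), ∅⟩, rfl⟩

theorem univ : IsRegularLang (Set.univ : Set (List α)) :=
  ⟨Unit, inferInstance, ⟨fun _ _ => (), (), Set.univ⟩, rfl⟩

theorem setOf_const (p : Prop) : IsRegularLang {_w : List α | p} := by
  by_cases hp : p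
  · simpa [hp] using univ
  · simpa [hp] using empty

theorem union {X Y : Set (List α)} (hX : IsRegularLang X) (hY : IsRegularLang Y) :
    IsRegularLang (X ∪ Y) :=
  Language.IsRegular.add hX hY

theorem diff {X Y : Set (List α)} (hX : IsRegularLang X) (hY : IsRegularLang Y) :
    IsRegularLang (X \ Y) :=
  Language.IsRegular.inf hX (Language.IsRegular.compl hY)

theorem biUnion {ι : Type*} {s : Set ι} (hs : s.Finite) {X : ι → Set (List α)}
    (hX : ∀ i ∈ s, IsRegularLang (X i)) : IsRegularLang (⋃ i ∈ s, X i) := by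
  induction s, hs using Set.Finite.induction_on with
  | empty => simpa using empty
  | @insert i s _ _ ih =>
    rw [Set.biUnion_insert]
    exact union (hX i (Set.mem_insert i s)) (ih fun j hj => hX j (Set.mem_insert_of_mem i hj))

theorem setOf_append_append_mem {X : Set (List α)} (hX : IsRegularLang X) (u v : List α) :
    IsRegularLang {f | u ++ f ++ v ∈ X} := by
  obtain ⟨Q, _, M, rfl⟩ := hX
  refine ⟨Q, inferInstance,
    ⟨M.step, M.evalFrom M.start u, {q | M.evalFrom q v ∈ M.accept}⟩, ?_⟩
  ext f
  show M.evalFrom (M.evalFrom (M.evalFrom M.start u) f) v ∈ M.accept ↔ u ++ f ++ v ∈ M.accepts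
  rw [DFA.mem_accepts, DFA.eval, DFA.evalFrom_of_append, DFA.evalFrom_of_append]

theorem image_append_left {X : Set (List α)} (hX : IsRegularLang X) (u : List α) :
    IsRegularLang ((u ++ ·) '' X) := by
  set Y := (u ++ ·) '' X
  have hquot_mem : ∀ x, Language.leftQuotient Y x ∈
      insert 0 (Set.range (Language.leftQuotient X) ∪
        Language.leftQuotient Y '' {x | x ∈ u.inits}) := by
    intro x
    by_cases hne : ∃ y, x ++ y ∈ Y
    · obtain ⟨y, f, -, hf⟩ := hne
      rcases List.prefix_or_prefix_of_prefix ⟨f, hf⟩ ⟨y, rfl⟩ with ⟨x', rfl⟩ | hxu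
      · refine Set.mem_insert_of_mem _ (Or.inl ⟨x', ?_⟩)
        ext z
        show x' ++ z ∈ X ↔ u ++ x' ++ z ∈ Y
        simp [Y]
      · exact Set.mem_insert_of_mem _ (Or.inr ⟨x, (List.mem_inits x u).2 hxu, rfl⟩)
    · push Not at hne
      exact Or.inl (Set.eq_empty_of_forall_notMem hne)
  exact Language.IsRegular.of_finite_range_leftQuotient <|
    (((Language.IsRegular.finite_range_leftQuotient hX).union
      (u.inits.finite_toSet.image _)).insert 0).subset (Set.range_subset_iff.2 hquot_mem)

theorem image_append_right {X : Set (List α)} (hX : IsRegularLang X) (v : List α) :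
    IsRegularLang ((· ++ v) '' X) := by
  have hrev : (· ++ v) '' X = Language.reverse ((v.reverse ++ ·) '' Language.reverse X) := by
    ext w
    constructor
    · rintro ⟨f, hf, rfl⟩
      exact ⟨f.reverse, show f.reverse.reverse ∈ X by simpa using hf, by simp⟩
    · rintro ⟨f, hf, hw⟩
      refine ⟨f.reverse, hf, ?_⟩
      rw [← List.reverse_reverse w, ← hw]
      simp
  rw [hrev]
  exact Language.IsRegular.reverse
    (image_append_left (Language.IsRegular.reverse (L := X) hX) v.reverse)

theorem image_append_append {X : Set (List α)} (hX : IsRegularLang X) (u v : List α) :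
    IsRegularLang ((fun f => u ++ f ++ v) '' X) := by
  rw [show (fun f => u ++ f ++ v) = (· ++ v) ∘ (u ++ ·) from rfl, Set.image_comp]
  exact image_append_right (image_append_left hX u) v

theorem of_append_mem_iff [Finite α] {X : Set (List α)} {t : List α} (ht : t ≠ [])
    (hper : ∀ y, t ++ y ∈ X ↔ y ∈ X)
    (hpre : ∀ x y, t.length ≤ x.length → x ++ y ∈ X → t <+: x) : IsRegularLang X := by
  have hquot_mem : ∀ n x, x.length = n → Language.leftQuotient X x ∈
      insert 0 (Language.leftQuotient X '' {x | x.length < t.length}) := by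
    intro n
    induction n using Nat.strong_induction_on with
    | _ n ih =>
      intro x hxn
      by_cases hshort : x.length < t.length
      · exact Or.inr ⟨x, hshort, rfl⟩
      by_cases hne : ∃ y, x ++ y ∈ X
      · obtain ⟨y, hy⟩ := hne
        obtain ⟨x', rfl⟩ := hpre x y (not_lt.1 hshort) hy
        have hquot : Language.leftQuotient X (t ++ x') = Language.leftQuotient X x' := by
          ext z
          show t ++ x' ++ z ∈ X ↔ x' ++ z ∈ X
          rw [List.append_assoc, hper]
        have hlen : x'.length < n := by
          have := List.length_pos_iff.2 ht
          simp only [List.length_append] at hxn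
          omega
        rw [hquot]
        exact ih _ hlen x' rfl
      · push Not at hne
        exact Or.inl (Set.eq_empty_of_forall_notMem hne)
  exact Language.IsRegular.of_finite_range_leftQuotient <|
    (((List.finite_length_lt α t.length).image _).insert 0).subset
      (Set.range_subset_iff.2 fun x => hquot_mem _ x rfl)

theorem setOf_append_eq_append_append [Finite α] (t v v' : List α) :
    IsRegularLang {f | f ++ v = t ++ f ++ v'} := by
  rcases eq_or_ne t [] with rfl | ht
  · simpa using setOf_const (α := α) (v = v')
  refine of_append_mem_iff ht (fun y => ?_) (fun x y hxy hmem => ?_)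
  · show t ++ y ++ v = t ++ (t ++ y) ++ v' ↔ y ++ v = t ++ y ++ v'
    simp only [List.append_assoc, List.append_cancel_left_eq]
  · refine List.prefix_of_prefix_length_le (l₃ := x ++ y ++ v) ⟨x ++ y ++ v', ?_⟩
      ⟨y ++ v, by simp⟩ hxy
    simpa [List.append_assoc] using hmem.symm

theorem setOf_append_append_eq [Finite α] (u v u' v' : List α) :
    IsRegularLang {f | u ++ f ++ v = u' ++ f ++ v'} := by
  by_cases hne : ∃ f, u ++ f ++ v = u' ++ f ++ v'
  · obtain ⟨f, hf⟩ := hne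
    rcases List.prefix_or_prefix_of_prefix (l₁ := u) (l₂ := u') (l₃ := u ++ f ++ v)
        ⟨f ++ v, by simp⟩ ⟨f ++ v', by simp [hf]⟩ with ⟨t, rfl⟩ | ⟨t, rfl⟩
    · simpa [List.append_assoc] using setOf_append_eq_append_append t v v'
    · simpa [List.append_assoc, eq_comm] using setOf_append_eq_append_append t v' v
  · push Not at hne
    rw [Set.eq_empty_of_forall_notMem hne]
    exact empty

end IsRegularLang

theorem bddAbove_lengths_commonInfix (w w' : List α) :
    BddAbove {n | ∃ f : List α, f.length = n ∧ f <:+: w ∧ f <:+: w'} :=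
  bddAbove_def.2 ⟨w.length, by rintro _ ⟨f, rfl, hw, -⟩; exact hw.length_le⟩

theorem exists_infix_length_eq_lcfLen (w w' : List α) :
    ∃ f : List α, f.length = lcfLen w w' ∧ f <:+: w ∧ f <:+: w' :=
  Nat.sSup_mem (s := {n | ∃ f : List α, f.length = n ∧ f <:+: w ∧ f <:+: w'})
    ⟨0, [], rfl, List.nil_infix, List.nil_infix⟩ (bddAbove_lengths_commonInfix w w')

theorem length_le_lcfLen {f w w' : List α} (hw : f <:+: w) (hw' : f <:+: w') :
    f.length ≤ lcfLen w w' :=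
  le_csSup (bddAbove_lengths_commonInfix w w') ⟨f, rfl, hw, hw'⟩

theorem dF_le_iff {w w' : List α} {k : ℕ} :
    dF w w' ≤ k ↔ ∃ u f v u' v' : List α, w = u ++ f ++ v ∧ w' = u' ++ f ++ v' ∧
      u.length + v.length + u'.length + v'.length ≤ k := by
  constructor
  · intro h
    obtain ⟨f, hf, ⟨u, v, rfl⟩, ⟨u', v', rfl⟩⟩ := exists_infix_length_eq_lcfLen w w'
    refine ⟨u, f, v, u', v', rfl, rfl, ?_⟩
    simp only [dF, List.length_append] at h
    omega
  · rintro ⟨u, f, v, u', v', rfl, rfl, hk⟩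
    have := length_le_lcfLen (List.infix_append u f v) (List.infix_append u' f v')
    simp only [dF, List.length_append]
    omega

theorem setOf_ne_dF_le_eq_biUnion (X : Set (List α)) (k : ℕ) :
    {w' | ∃ w ∈ X, w ≠ w' ∧ dF w w' ≤ k} =
      ⋃ c ∈ {c : (List α × List α) × (List α × List α) |
          c.1.1.length + c.1.2.length + c.2.1.length + c.2.2.length ≤ k},
        (fun f => c.2.1 ++ f ++ c.2.2) ''
          ({f | c.1.1 ++ f ++ c.1.2 ∈ X} \ {f | c.1.1 ++ f ++ c.1.2 = c.2.1 ++ f ++ c.2.2}) := by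
  ext w'
  simp only [Set.mem_iUnion, Set.mem_image, Set.mem_sdiff, Set.mem_ofPred_eq, exists_prop,
    Prod.exists]
  constructor
  · rintro ⟨w, hw, hne, hdF⟩
    obtain ⟨u, f, v, u', v', rfl, rfl, hk⟩ := dF_le_iff.1 hdF
    exact ⟨u, v, u', v', hk, f, ⟨hw, hne⟩, rfl⟩
  · rintro ⟨u, v, u', v', hk, f, ⟨hw, hne⟩, rfl⟩
    exact ⟨_, hw, hne, dF_le_iff.2 ⟨u, f, v, u', v', rfl, rfl, hk⟩⟩

end

theorem stmt_10_general {A : Type*} [Fintype A]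
    (k : ℕ) (X : Set (List A)) (hX : IsRegularLang X) :
    IsRegularLang {w' : List A | ∃ w ∈ X, w ≠ w' ∧ dF w w' ≤ k} := by
  rw [setOf_ne_dF_le_eq_biUnion]
  refine IsRegularLang.biUnion ?_ fun c _ => ?_
  · have hB := List.finite_length_le A k
    refine ((hB.prod hB).prod (hB.prod hB)).subset ?_
    rintro ⟨⟨u, v⟩, u', v'⟩ hc
    simp only [Set.mem_ofPred_eq] at hc
    simp only [Set.mem_prod, Set.mem_ofPred_eq]
    omega
  · exact ((hX.setOf_append_append_mem _ _).diff
      (IsRegularLang.setOf_append_append_eq _ _ _ _)).image_append_append _ _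

/-- the image of a regular language under the anti-reflexive
restriction of `F_k` is regular. -/
theorem stmt_10 {A : Type*} [Fintype A] (hA : 2 ≤ Fintype.card A)
    (k : ℕ) (hk : 1 ≤ k) (X : Set (List A)) (hX : IsRegularLang X) :
    IsRegularLang {w' : List A | ∃ w ∈ X, w ≠ w' ∧ dF w w' ≤ k} :=
  stmt_10_general k X hX
end

section
/- Let A be a finite alphabet with |A| ≥ 2 and k a positive integer. Every regular code X ⊆ A* that is F̲_k-independent (i.e., there is no pair x, y ∈ X with x ≠ y and d_F(x,y) ≤ k) can be embedded into a complete code Z ⊇ X that is still F̲_k-independent (and may be taken regular). -/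
open scoped ENNReal

/-!
If `X` is complete, take `Z = X`. Otherwise some word `w₀` is a factor of no word of `X*`, and
`X` is completed as `Z = X ∪ y (U y)*`, where `y = aⁿ b w₀ a bⁿ` with `n = |w₀| + k + 2` and `U`
is the set of nonempty words lying neither in `X*` nor in `A* y A*`.

The word `y` is unbordered and is a factor of no word of `X*`, so the occurrences of `y` in a word
of `Z*` are exactly the ones contributed by the factors from `y (U y)*`; they cut the word uniquely
into blocks, which makes `Z` a code. Every `w` is a factor of `y w y ∈ Z*`, so `Z` is complete.
A common factor of `z ∈ y (U y)*` with margins `s`, `t` of total length at most `k < n` contains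
`w₀` (so `z` is far from `X`), begins with `a^(n - |s|) b` and ends with `a b^(n - |t|)`, which
pins down the margins and hence `z`. `Z` is regular because regular languages are closed under
Boolean operations, product and star; the last two are proved here with Myhill–Nerode.
-/

section

open List Computability

variable {A : Type*}

namespace Language

variable {α : Type*} {L M : Language α}

theorem isRegular_of_finite (hL : (L : Set (List α)).Finite) : L.IsRegular := by
  refine .of_finite_range_leftQuotient <|
    ((hL.biUnion fun x _ => x.tails.finite_toSet).powerset).subset ?_
  rintro _ ⟨w, rfl⟩ v hv
  exact Set.mem_biUnion hv ((mem_tails _ _).2 (suffix_append w v))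

theorem isRegular_top : (⊤ : Language α).IsRegular := by
  rw [← compl_bot]
  exact (isRegular_of_finite Set.finite_empty).compl

theorem leftQuotient_mul (w : List α) :
    (L * M).leftQuotient w =
      L.leftQuotient w * M + ⨆ v ∈ {v | ∃ u ∈ L, u ++ v = w}, M.leftQuotient v := by
  ext z
  simp only [mem_leftQuotient, mem_add, mem_mul, mem_iSup, Set.mem_ofPred_eq]
  constructor
  · rintro ⟨u, hu, m, hm, huv⟩
    rcases append_eq_append_iff.1 huv with ⟨c, rfl, rfl⟩ | ⟨c, rfl, rfl⟩
    · exact .inr ⟨c, ⟨u, hu, rfl⟩, hm⟩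
    · exact .inl ⟨c, hu, m, hm, rfl⟩
  · rintro (⟨c, hc, m, hm, rfl⟩ | ⟨v, ⟨u, hu, rfl⟩, hv⟩)
    · exact ⟨w ++ c, hc, m, hm, by simp⟩
    · exact ⟨u, hu, v ++ z, hv, by simp⟩

protected theorem IsRegular.mul (hL : L.IsRegular) (hM : M.IsRegular) : (L * M).IsRegular := by
  refine .of_finite_range_leftQuotient <|
    ((hL.finite_range_leftQuotient.prod hM.finite_range_leftQuotient.powerset).image
      fun p => p.1 * M + sSup p.2).subset ?_
  rintro _ ⟨w, rfl⟩
  refine ⟨(L.leftQuotient w, M.leftQuotient '' {v | ∃ u ∈ L, u ++ v = w}),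
    ⟨⟨w, rfl⟩, Set.image_subset_range _ _⟩, ?_⟩
  dsimp only
  rw [leftQuotient_mul, sSup_image]

theorem mem_top_mul_singleton_mul_top {y u : List α} :
    u ∈ (⊤ : Language α) * {y} * ⊤ ↔ y <:+: u := by
  simp only [mem_mul]
  constructor
  · rintro ⟨_, ⟨s, -, _, rfl, rfl⟩, t, -, rfl⟩
    exact ⟨s, t, rfl⟩
  · rintro ⟨s, t, rfl⟩
    exact ⟨s ++ y, ⟨s, trivial, y, rfl, rfl⟩, t, trivial, rfl⟩

theorem append_mem_kstar {x y : List α} (hx : x ∈ L∗) (hy : y ∈ L∗) : x ++ y ∈ L∗ := by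
  rw [← kstar_mul_kstar L]
  exact append_mem_mul hx hy

-- The summand `L∗.leftQuotient w ⊓ 1` is `0` or `1`, and the other one is determined by a set
-- of left quotients of `L`: this is what makes the left quotients of `L∗` finitely many.
theorem leftQuotient_kstar (w : List α) :
    L∗.leftQuotient w =
      L∗.leftQuotient w ⊓ 1 + ⨆ v ∈ {v | ∃ x ∈ L∗, x ++ v = w}, L.leftQuotient v * L∗ := by
  ext z
  simp only [mem_leftQuotient, mem_add, mem_inf, mem_one, mem_mul, mem_iSup, Set.mem_ofPred_eq]
  constructor
  · intro h
    by_cases hz : z = []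
    · exact .inl ⟨h, hz⟩
    right
    obtain ⟨S, hS, hSL⟩ := mem_kstar.1 h
    clear h
    induction S generalizing w with
    | nil => exact absurd (append_eq_nil_iff.1 hS).2 hz
    | cons u S ih =>
      rcases append_eq_append_iff.1 hS with ⟨c, rfl, rfl⟩ | ⟨c, rfl, hc⟩
      · exact ⟨w, ⟨[], nil_mem_kstar L, rfl⟩, c, hSL _ (by simp), S.flatten,
          join_mem_kstar fun v hv => hSL v (by simp [hv]), rfl⟩
      · obtain ⟨v, ⟨x, hx, rfl⟩, hv⟩ := ih c hc.symm fun v hv => hSL v (by simp [hv])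
        exact ⟨v, ⟨u ++ x, mul_kstar_le_kstar (a := L) (append_mem_mul (hSL u (by simp)) hx),
          by simp⟩, hv⟩
  · rintro (⟨h, _⟩ | ⟨v, ⟨x, hx, rfl⟩, c, hc, m, hm, rfl⟩)
    · exact h
    · have : (x ++ v) ++ (c ++ m) = x ++ ((v ++ c) ++ m) := by simp
      rw [this]
      exact append_mem_kstar hx (mul_kstar_le_kstar (a := L) (append_mem_mul hc hm))

protected theorem IsRegular.kstar (hL : L.IsRegular) : L∗.IsRegular := by
  refine .of_finite_range_leftQuotient <|
    (((Set.finite_singleton ([] : List α)).powerset.prod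
      hL.finite_range_leftQuotient.powerset).image
        fun p => (p.1 : Language α) + sSup ((· * L∗) '' p.2)).subset ?_
  rintro _ ⟨w, rfl⟩
  refine ⟨(L∗.leftQuotient w ⊓ (1 : Language α), L.leftQuotient '' {v | ∃ x ∈ L∗, x ++ v = w}),
    ⟨fun z hz => hz.2, Set.image_subset_range _ _⟩, ?_⟩
  dsimp only
  rw [sSup_image, iSup_image]
  exact (leftQuotient_kstar w).symm

end Language

section CommonFactor

theorem exists_common_factor_length_eq_lcfLen (w w' : List A) :
    ∃ f : List A, f.length = lcfLen w w' ∧ f <:+: w ∧ f <:+: w' :=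
  Nat.sSup_mem (s := {n | ∃ f : List A, f.length = n ∧ f <:+: w ∧ f <:+: w'})
    ⟨0, [], rfl, nil_infix, nil_infix⟩ ⟨w.length, fun _ ⟨_, hf, h, _⟩ => hf ▸ h.length_le⟩

theorem lcfLen_comm (w w' : List A) : lcfLen w w' = lcfLen w' w := by
  simp only [lcfLen, and_comm (a := _ <:+: w)]

theorem dF_comm (w w' : List A) : dF w w' = dF w' w := by
  rw [dF, dF, lcfLen_comm, Nat.add_comm]

theorem exists_decomp_of_dF_le {w w' : List A} {k : ℕ} (h : dF w w' ≤ k) :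
    ∃ f s t s' t' : List A, w = s ++ f ++ t ∧ w' = s' ++ f ++ t' ∧
      s.length + t.length + (s'.length + t'.length) ≤ k := by
  obtain ⟨f, hlen, ⟨s, t, rfl⟩, ⟨s', t', rfl⟩⟩ := exists_common_factor_length_eq_lcfLen w w'
  refine ⟨f, s, t, s', t', rfl, rfl, ?_⟩
  rw [dF, ← hlen] at h
  simp only [length_append] at h
  omega

end CommonFactor

section Prefix

theorem prefix_of_append_prefix {p q s f t : List A} (h : p ++ q <+: s ++ f ++ t)
    (hp : p.length = s.length) (hq : q.length ≤ f.length) : q <+: f := by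
  rw [append_assoc] at h
  obtain rfl : p = s :=
    (prefix_of_prefix_length_le ((prefix_append p q).trans h) (prefix_append s _)
      hp.le).eq_of_length hp
  exact prefix_of_prefix_length_le ((prefix_append_right_inj p).1 h) (prefix_append f t) hq

theorem replicate_append_singleton_prefix_inj {a b : A} (hab : a ≠ b) :
    ∀ {i j : ℕ} {l : List A}, replicate i a ++ [b] <+: l → replicate j a ++ [b] <+: l → i = j
  | 0, 0, _, _, _ => rfl
  | i + 1, j + 1, c :: l, hi, hj => by
    rw [replicate_succ, cons_append, cons_prefix_cons] at hi hj
    rw [replicate_append_singleton_prefix_inj hab hi.2 hj.2]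
  | 0, _ + 1, _ :: _, hi, hj => by
    simp only [replicate_succ, cons_append, replicate_zero, nil_append, cons_prefix_cons] at hi hj
    exact absurd (hj.1.trans hi.1.symm) hab
  | _ + 1, 0, _ :: _, hi, hj => by
    simp only [replicate_succ, cons_append, replicate_zero, nil_append, cons_prefix_cons] at hi hj
    exact absurd (hi.1.trans hj.1.symm) hab
  | 0, _, [], hi, _ | _ + 1, _, [], hi, _ => by simp at hi

theorem exists_infix_free_prefix {y w : List A} (hy : y ≠ []) (h : y <:+: w) :
    ∃ g r, w = g ++ y ++ r ∧ ¬ y <:+: g := by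
  induction w with
  | nil => exact absurd (eq_nil_of_infix_nil h) hy
  | cons c w ih =>
    by_cases hp : y <+: c :: w
    · obtain ⟨r, hr⟩ := hp
      exact ⟨[], r, by simp [hr], fun h => hy (eq_nil_of_infix_nil h)⟩
    · obtain ⟨g, r, rfl, hg⟩ := ih ((infix_cons_iff.1 h).resolve_left hp)
      refine ⟨c :: g, r, rfl, fun h' => (infix_cons_iff.1 h').elim ?_ hg⟩
      exact fun h'' => hp (h''.trans (by simp))

end Prefix

section Unbordered

def Unbordered (y : List A) : Prop :=
  ∀ x : List A, x <+: y → x <:+ y → x ≠ [] → x = y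

variable {y : List A}

theorem Unbordered.eq_nil_of_prefix_append (hy : Unbordered y) {r v : List A}
    (hr : ¬ y <+: r) (h : y <+: r ++ v) (h' : y <+: v) : r = [] := by
  have hlt : r.length < y.length := by
    by_contra! hle
    exact hr (prefix_of_prefix_length_le h (prefix_append r v) hle)
  obtain ⟨x, rfl⟩ := prefix_of_prefix_length_le (prefix_append r v) h hlt.le
  have hx : x <+: r ++ x :=
    prefix_of_prefix_length_le ((prefix_append_right_inj r).1 h) h' (by simp)
  have hxne : x ≠ [] := by rintro rfl; simp at hlt
  simpa using congrArg length (hy x hx (suffix_append r x) hxne)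

theorem Unbordered.eq_of_append_eq_append (hy : Unbordered y) {u v u' v' : List A}
    (h : u ++ v = u' ++ v') (hu : ¬ y <:+: u) (hu' : ¬ y <:+: u')
    (hv : v = [] ∨ y <+: v) (hv' : v' = [] ∨ y <+: v') : u = u' ∧ v = v' := by
  have key : ∀ {u r v : List A}, ¬ y <:+: u ++ r → (r ++ v = [] ∨ y <+: r ++ v) →
      (v = [] ∨ y <+: v) → r = [] := by
    intro u r v hur h h'
    have hr : ¬ y <+: r := fun h => hur (h.isInfix.trans (suffix_append u r).isInfix)
    rcases h with h | h
    · exact (append_eq_nil_iff.1 h).1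
    rcases h' with rfl | h'
    · exact absurd (by simpa using h) hr
    · exact hy.eq_nil_of_prefix_append hr h h'
  rcases append_eq_append_iff.1 h with ⟨r, rfl, rfl⟩ | ⟨r, rfl, rfl⟩
  · obtain rfl := key hu' hv hv'
    simp
  · obtain rfl := key hu hv' hv
    simp

theorem getElem_eq_getElem_of_border {y r x : List A} (hr : r ++ x = y) (hx : x <+: y)
    {i j : ℕ} (hij : i + r.length = j) (hj : j < y.length) : y[i] = y[j] := by
  subst hr hij
  have hix : i < x.length := by simp at hj; omega
  rw [← hx.getElem hix, getElem_append_right (by omega)]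
  simp

end Unbordered

section Marker

def marker (a b : A) (w₀ : List A) (n : ℕ) : List A :=
  replicate n a ++ b :: (w₀ ++ a :: replicate n b)

variable {a b : A} {w₀ : List A} {n : ℕ}

theorem length_marker : (marker a b w₀ n).length = 2 * n + 2 + w₀.length := by
  simp [marker]; omega

theorem reverse_marker : (marker a b w₀ n).reverse = marker b a w₀.reverse n := by
  simp [marker]

theorem marker_eq_replicate_append {m : ℕ} (hm : m ≤ n) :
    marker a b w₀ n = replicate m a ++ (replicate (n - m) a ++ b :: w₀) ++ a :: replicate n b := by
  have : replicate n a = replicate m a ++ replicate (n - m) a := by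
    rw [← replicate_add, Nat.add_sub_cancel' hm]
  rw [marker, this]
  simp only [append_assoc, cons_append]

theorem replicate_append_singleton_prefix_marker : replicate n a ++ [b] <+: marker a b w₀ n :=
  ⟨w₀ ++ a :: replicate n b, by simp [marker]⟩

theorem infix_marker : w₀ <:+: marker a b w₀ n :=
  ⟨replicate n a ++ [b], a :: replicate n b, by simp [marker]⟩

theorem getElem_marker_of_lt {i : ℕ} (hi : i < n) (h : i < (marker a b w₀ n).length) :
    (marker a b w₀ n)[i] = a := by
  simp [marker, getElem_append_left, hi]

theorem getElem_marker_self (h : n < (marker a b w₀ n).length) : (marker a b w₀ n)[n] = b := by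
  simp [marker]

theorem getElem_marker_of_le {i : ℕ} (hi : n + 2 + w₀.length ≤ i)
    (h : i < (marker a b w₀ n).length) : (marker a b w₀ n)[i] = b := by
  have e : marker a b w₀ n = (replicate n a ++ b :: w₀ ++ [a]) ++ replicate n b := by
    simp [marker]
  rw [getElem_of_eq e, getElem_append_right (by simp; omega)]
  simp

-- A border `x` with `r ++ x = marker` makes `|r|` a period. A period `|r| ≤ n` moves the `b` at
-- position `n` into the leading `aⁿ`; a longer one moves the trailing `bⁿ` into it.
theorem unbordered_marker (hab : a ≠ b) (hn : w₀.length + 1 < n) :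
    Unbordered (marker a b w₀ n) := by
  intro x hpre ⟨r, hr⟩ hx
  by_contra hne
  have hlen : (r ++ x).length = 2 * n + 2 + w₀.length := hr ▸ length_marker
  have hr0 : r ≠ [] := by rintro rfl; exact hne (by simpa using hr)
  have hxpos := length_pos_iff.2 hx
  have hrpos := length_pos_iff.2 hr0
  simp only [length_append] at hlen
  have period := fun {i j} (hij : i + r.length = j) (hj : j < (marker a b w₀ n).length) =>
    getElem_eq_getElem_of_border hr hpre hij hj
  rcases le_or_gt r.length n with hle | hgt
  · have := period (i := n - r.length) (j := n) (by omega) (by rw [length_marker]; omega)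
    rw [getElem_marker_of_lt (by omega), getElem_marker_self] at this
    exact hab this
  · have := period (i := n + 2 + w₀.length - r.length) (j := max (n + 2 + w₀.length) r.length)
      (by omega) (by rw [length_marker]; omega)
    rw [getElem_marker_of_lt (by omega), getElem_marker_of_le (by omega)] at this
    exact hab this

end Marker

section Completion

variable (X : Language A) (y : List A)

def content : Language A :=
  {u | u ≠ [] ∧ ¬ y <:+: u ∧ u ∉ X∗}

inductive IsMarked : List A → Prop
  | self : IsMarked y
  | cons {u z : List A} : u ∈ content X y → IsMarked z → IsMarked (y ++ u ++ z)

def markedWords : Language A := {z | IsMarked X y z}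

def completion : Language A := X + markedWords X y

variable {X y}

theorem IsMarked.prefix {z : List A} (hz : IsMarked X y z) : y <+: z := by
  cases hz with
  | self => exact prefix_refl y
  | cons _ _ => exact ⟨_, (append_assoc _ _ _).symm⟩

theorem IsMarked.suffix {z : List A} (hz : IsMarked X y z) : y <:+ z := by
  induction hz with
  | self => exact suffix_refl y
  | cons _ _ ih => exact ih.trans (suffix_append _ _)

theorem exists_run_append_marked {l : List (List A)} (hl : ∀ w ∈ l, w ∈ completion X y) :
    ∃ xs rest, l = xs ++ rest ∧ (∀ x ∈ xs, x ∈ X) ∧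
      (rest = [] ∨ ∃ z r, rest = z :: r ∧ IsMarked X y z) := by
  induction l with
  | nil => exact ⟨[], [], rfl, by simp, .inl rfl⟩
  | cons w l ih =>
    rcases hl w (mem_cons_self ..) with hw | hw
    · obtain ⟨xs, rest, rfl, hxs, hrest⟩ := ih fun v hv => hl v (mem_cons_of_mem _ hv)
      exact ⟨w :: xs, rest, rfl, forall_mem_cons.2 ⟨hw, hxs⟩, hrest⟩
    · exact ⟨[], w :: l, rfl, by simp, .inr ⟨w, l, rfl, hw⟩⟩

theorem flatten_eq_nil_or_prefix {rest : List (List A)}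
    (h : rest = [] ∨ ∃ z r, rest = z :: r ∧ IsMarked X y z) :
    rest.flatten = [] ∨ y <+: rest.flatten := by
  rcases h with rfl | ⟨z, r, rfl, hz⟩
  · exact .inl rfl
  · exact .inr (hz.prefix.trans (prefix_append z _))

theorem flatten_ne_content_append (hy : Unbordered y) (hXy : ∀ w ∈ X∗, ¬ y <:+: w)
    {l : List (List A)} (hl : ∀ w ∈ l, w ∈ completion X y)
    {u v : List A} (hu : u ∈ content X y) (hv : y <+: v) : l.flatten ≠ u ++ v := by
  intro h
  obtain ⟨xs, rest, rfl, hxs, hrest⟩ := exists_run_append_marked hl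
  rw [flatten_append] at h
  obtain ⟨rfl, -⟩ := hy.eq_of_append_eq_append h (hXy _ (Language.join_mem_kstar hxs)) hu.2.1
    (flatten_eq_nil_or_prefix hrest) (.inr hv)
  exact hu.2.2 (Language.join_mem_kstar hxs)

theorem IsMarked.eq_of_append_flatten_eq (hy : Unbordered y) (hXy : ∀ w ∈ X∗, ¬ y <:+: w)
    {z z' : List A} {l l' : List (List A)} (hz : IsMarked X y z) (hz' : IsMarked X y z')
    (hl : ∀ w ∈ l, w ∈ completion X y) (hl' : ∀ w ∈ l', w ∈ completion X y)
    (h : z ++ l.flatten = z' ++ l'.flatten) :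
    z = z' ∧ l.flatten = l'.flatten := by
  induction hz generalizing z' with
  | self =>
    cases hz' with
    | self => exact ⟨rfl, append_cancel_left h⟩
    | cons hu' hz₁' =>
      simp only [append_assoc] at h
      exact absurd (append_cancel_left h) (flatten_ne_content_append hy hXy
        hl hu' (hz₁'.prefix.trans (prefix_append _ _)))
  | cons hu hz₁ ih =>
    cases hz' with
    | self =>
      simp only [append_assoc] at h
      exact absurd (append_cancel_left h.symm) (flatten_ne_content_append hy hXy
        hl' hu (hz₁.prefix.trans (prefix_append _ _)))
    | cons hu' hz₁' =>
      simp only [append_assoc] at h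
      obtain ⟨rfl, htail⟩ := hy.eq_of_append_eq_append (append_cancel_left h) hu.2.1 hu'.2.1
        (.inr (hz₁.prefix.trans (prefix_append _ _)))
        (.inr (hz₁'.prefix.trans (prefix_append _ _)))
      obtain ⟨rfl, hflat⟩ := ih hz₁' htail
      exact ⟨rfl, hflat⟩

theorem isCode_completion (hy : Unbordered y) (hXy : ∀ w ∈ X∗, ¬ y <:+: w) (hX : IsCode X) :
    IsCode (completion X y) := by
  have hy0 : y ≠ [] := fun h => hXy [] (Language.nil_mem_kstar _) (h ▸ nil_infix)
  intro l m hl hm h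
  induction hlen : l.length using Nat.strong_induction_on generalizing l m with
  | _ N ih =>
  obtain ⟨xs, rest, rfl, hxs, hrest⟩ := exists_run_append_marked hl
  obtain ⟨xs', rest', rfl, hxs', hrest'⟩ := exists_run_append_marked hm
  simp only [flatten_append] at h
  obtain ⟨hflat, hrest_eq⟩ := hy.eq_of_append_eq_append h (hXy _ (Language.join_mem_kstar hxs))
    (hXy _ (Language.join_mem_kstar hxs')) (flatten_eq_nil_or_prefix hrest)
    (flatten_eq_nil_or_prefix hrest')
  obtain rfl := hX xs xs' hxs hxs' hflat
  have hne : ∀ {z : List A} {r : List (List A)}, IsMarked X y z → (z :: r).flatten ≠ [] :=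
    fun hz h => hy0 (prefix_nil.1 (h ▸ hz.prefix.trans (prefix_append _ _)))
  rcases hrest with rfl | ⟨z, r, rfl, hz⟩ <;> rcases hrest' with rfl | ⟨z', r', rfl, hz'⟩
  · rfl
  · exact absurd hrest_eq.symm (hne hz')
  · exact absurd hrest_eq (hne hz)
  · have hr : ∀ w ∈ r, w ∈ completion X y := fun w hw => hl w (by simp [hw])
    have hr' : ∀ w ∈ r', w ∈ completion X y := fun w hw => hm w (by simp [hw])
    obtain ⟨rfl, hflat⟩ := hz.eq_of_append_flatten_eq hy hXy hz' hr hr' hrest_eq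
    rw [ih r.length (by simp at hlen; omega) r r' hr hr' hflat rfl]

theorem exists_marked_append_of_infix_free {g z : List A} {l : List (List A)}
    (hg : ¬ y <:+: g) (hz : IsMarked X y z) (hl : ∀ w ∈ l, w ∈ completion X y) :
    ∃ (z' : List A) (l' : List (List A)), IsMarked X y z' ∧ (∀ w ∈ l', w ∈ completion X y) ∧
      y ++ g ++ (z ++ l.flatten) = z' ++ l'.flatten := by
  by_cases hgX : g ∈ X∗
  · obtain ⟨xs, rfl, hxs⟩ := Language.mem_kstar.1 hgX
    refine ⟨y, xs ++ z :: l, .self, ?_, by simp⟩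
    simp only [mem_append, mem_cons]
    rintro w (hw | rfl | hw)
    exacts [.inl (hxs w hw), .inr hz, hl w hw]
  · have hg0 : g ≠ [] := by rintro rfl; exact hgX (Language.nil_mem_kstar _)
    exact ⟨y ++ g ++ z, l, .cons ⟨hg0, hg, hgX⟩ hz, hl, by simp⟩

theorem exists_marked_cover (hy : y ≠ []) (w : List A) :
    ∃ (z : List A) (l : List (List A)), IsMarked X y z ∧ (∀ v ∈ l, v ∈ completion X y) ∧
      y ++ w ++ y = z ++ l.flatten := by
  induction hlen : w.length using Nat.strong_induction_on generalizing w with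
  | _ N ih =>
  by_cases hw : y <:+: w
  · obtain ⟨g, r, rfl, hg⟩ := exists_infix_free_prefix hy hw
    obtain ⟨z, l, hz, hl, h⟩ := ih r.length (by
      rw [← hlen]; simp only [length_append]; have := length_pos_iff.2 hy; omega) r rfl
    obtain ⟨z', l', hz', hl', h'⟩ := exists_marked_append_of_infix_free hg hz hl
    exact ⟨z', l', hz', hl', by rw [← h', ← h]; simp⟩
  · obtain ⟨z', l', hz', hl', h'⟩ :=
      exists_marked_append_of_infix_free (l := []) hw IsMarked.self (by simp)
    exact ⟨z', l', hz', hl', by simpa using h'⟩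

theorem isComplete_completion (hy : y ≠ []) : IsCompleteSet (completion X y) := by
  intro w
  obtain ⟨z, l, hz, hl, h⟩ := exists_marked_cover (X := X) hy w
  refine ⟨z :: l, forall_mem_cons.2 ⟨.inr hz, hl⟩, ⟨y, y, ?_⟩⟩
  rw [flatten_cons, ← h]

theorem exists_not_infix_kstar_of_not_isComplete (h : ¬ IsCompleteSet X) :
    ∃ w₀ : List A, ∀ w ∈ X∗, ¬ w₀ <:+: w := by
  simp only [IsCompleteSet, not_forall, not_exists, not_and] at h
  obtain ⟨w₀, hw₀⟩ := h
  exact ⟨w₀, fun w hw => by obtain ⟨l, rfl, hl⟩ := Language.mem_kstar.1 hw; exact hw₀ l hl⟩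

end Completion

section Regularity

variable {X : Language A} {y : List A}

theorem content_eq : content X y = (1 + ⊤ * {y} * ⊤ + X∗)ᶜ := by
  ext u
  change (u ≠ [] ∧ ¬ y <:+: u ∧ u ∉ X∗) ↔ u ∉ 1 + ⊤ * {y} * ⊤ + X∗
  rw [Language.mem_add, Language.mem_add, Language.mem_one,
    Language.mem_top_mul_singleton_mul_top]
  tauto

theorem markedWords_eq : markedWords X y = {y} * (content X y * {y})∗ := by
  ext z
  rw [Language.mem_mul]
  constructor
  · intro (hz : IsMarked X y z)
    induction hz with
    | self => exact ⟨y, rfl, [], Language.nil_mem_kstar _, append_nil y⟩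
    | @cons u _ hu _ ih =>
      obtain ⟨a, ha, v, hv, rfl⟩ := ih
      rw [show a = y from ha]
      refine ⟨y, rfl, u ++ y ++ v, ?_, by simp⟩
      exact mul_kstar_le_kstar (a := content X y * {y})
        (Language.append_mem_mul (Language.append_mem_mul hu rfl) hv)
  · rintro ⟨a, ha, v, hv, rfl⟩
    rw [show a = y from ha]
    obtain ⟨S, rfl, hS⟩ := Language.mem_kstar.1 hv
    clear hv
    show IsMarked X y _
    induction S with
    | nil => exact (append_nil y).symm ▸ IsMarked.self
    | cons w S ih =>
      obtain ⟨u, hu, b, hb, rfl⟩ := Language.mem_mul.1 (hS _ (mem_cons_self ..))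
      rw [show b = y from hb]
      simpa using IsMarked.cons hu (ih fun v hv => hS v (mem_cons_of_mem _ hv))

theorem isRegular_completion (hX : X.IsRegular) : (completion X y).IsRegular := by
  have hy := Language.isRegular_of_finite (Set.finite_singleton y)
  have hcontent : (content X y).IsRegular := by
    rw [content_eq]
    exact (((Language.isRegular_of_finite (Set.finite_singleton [])).add
      ((Language.isRegular_top.mul hy).mul Language.isRegular_top)).add hX.kstar).compl
  rw [completion, markedWords_eq]
  exact hX.add (hy.mul (hcontent.mul hy).kstar)

end Regularity

section Independence

variable {a b : A} {n : ℕ}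

theorem eq_of_prefix_run (hab : a ≠ b) {y s s' f t t' : List A}
    (hy : replicate n a ++ [b] <+: y) (hz : y <+: s ++ f ++ t) (hz' : y <+: s' ++ f ++ t')
    (hs : s.length ≤ n) (hs' : s'.length ≤ n)
    (hf : n < s.length + f.length) (hf' : n < s'.length + f.length) : s = s' := by
  have key : ∀ {s t : List A}, y <+: s ++ f ++ t → s.length ≤ n → n < s.length + f.length →
      s <+: y ∧ replicate (n - s.length) a ++ [b] <+: f := by
    intro s t hz hs hf
    have hrun := hy.trans hz
    rw [← Nat.add_sub_cancel' hs, replicate_add, append_assoc] at hrun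
    have hny := hy.length_le
    simp only [length_append, length_replicate, length_singleton] at hny
    exact ⟨prefix_of_prefix_length_le (by simp) hz (by omega),
      prefix_of_append_prefix hrun (by simp) (by simp; omega)⟩
  obtain ⟨hsy, hrun⟩ := key hz hs hf
  obtain ⟨hsy', hrun'⟩ := key hz' hs' hf'
  have := replicate_append_singleton_prefix_inj hab hrun hrun'
  exact (prefix_of_prefix_length_le hsy hsy' (by omega)).eq_of_length (by omega)

variable {X : Language A} {w₀ : List A} {k : ℕ}

theorem IsMarked.eq_of_dF_le (hab : a ≠ b) (hkn : k < n) {z z' : List A}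
    (hz : IsMarked X (marker a b w₀ n) z) (hz' : IsMarked X (marker a b w₀ n) z')
    (hd : dF z z' ≤ k) : z = z' := by
  obtain ⟨f, s, t, s', t', rfl, rfl, hk⟩ := exists_decomp_of_dF_le hd
  have hl := hz.prefix.length_le
  have hl' := hz'.prefix.length_le
  simp only [length_append, length_marker] at hl hl'
  have hs : s = s' := eq_of_prefix_run hab replicate_append_singleton_prefix_marker
    hz.prefix hz'.prefix (by omega) (by omega) (by omega) (by omega)
  have hrev : ∀ {s t : List A}, IsMarked X (marker a b w₀ n) (s ++ f ++ t) →
      marker b a w₀.reverse n <+: t.reverse ++ f.reverse ++ s.reverse := fun hz => by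
    simpa [← reverse_marker] using reverse_prefix.2 hz.suffix
  have ht : t.reverse = t'.reverse := eq_of_prefix_run hab.symm
    replicate_append_singleton_prefix_marker (hrev hz) (hrev hz')
    (by simp; omega) (by simp; omega) (by simp; omega) (by simp; omega)
  rw [hs, reverse_inj.1 ht]

theorem IsMarked.not_dF_le_of_mem (hkn : k < n) (hXw₀ : ∀ w ∈ X∗, ¬ w₀ <:+: w) {z x : List A}
    (hz : IsMarked X (marker a b w₀ n) z) (hx : x ∈ X) : ¬ dF z x ≤ k := by
  intro hd
  obtain ⟨f, s, t, s', t', rfl, rfl, hk⟩ := exists_decomp_of_dF_le hd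
  have hl := hz.prefix.length_le
  simp only [length_append, length_marker] at hl
  have hpre := hz.prefix
  rw [marker_eq_replicate_append (by omega : s.length ≤ n)] at hpre
  have hf : replicate (n - s.length) a ++ b :: w₀ <+: f :=
    prefix_of_append_prefix ((prefix_append _ _).trans hpre) (by simp) (by simp; omega)
  refine hXw₀ _ (Language.join_mem_kstar (L := [s' ++ f ++ t']) (by simpa using hx)) ?_
  exact (IsSuffix.isInfix ⟨replicate (n - s.length) a ++ [b], by simp⟩).trans
    (hf.isInfix.trans (by simp))

theorem completion_marker_independent (hab : a ≠ b) (hkn : k < n)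
    (hXw₀ : ∀ w ∈ X∗, ¬ w₀ <:+: w) (hind : ¬ ∃ x ∈ X, ∃ y ∈ X, x ≠ y ∧ dF x y ≤ k) :
    ¬ ∃ x ∈ completion X (marker a b w₀ n), ∃ y ∈ completion X (marker a b w₀ n),
      x ≠ y ∧ dF x y ≤ k := by
  rintro ⟨x, hx | hx, x', hx' | hx', hne, hd⟩
  · exact hind ⟨x, hx, x', hx', hne, hd⟩
  · exact IsMarked.not_dF_le_of_mem hkn hXw₀ hx' hx (dF_comm x x' ▸ hd)
  · exact IsMarked.not_dF_le_of_mem hkn hXw₀ hx hx' hd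
  · exact hne (IsMarked.eq_of_dF_le hab hkn hx hx' hd)

end Independence

end

theorem stmt_15_general {A : Type*} [Fintype A] (hA : 2 ≤ Fintype.card A)
    (k : ℕ) (X : Set (List A))
    (hreg : IsRegularLang X) (hcode : IsCode X)
    (hind : ¬ ∃ x ∈ X, ∃ y ∈ X, x ≠ y ∧ dF x y ≤ k) :
    ∃ Z : Set (List A), X ⊆ Z ∧ IsCode Z ∧ IsCompleteSet Z ∧
      (¬ ∃ x ∈ Z, ∃ y ∈ Z, x ≠ y ∧ dF x y ≤ k) ∧ IsRegularLang Z := by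
  by_cases hcomp : IsCompleteSet X
  · exact ⟨X, subset_rfl, hcode, hcomp, hind, hreg⟩
  obtain ⟨w₀, hXw₀⟩ := exists_not_infix_kstar_of_not_isComplete hcomp
  obtain ⟨a, b, hab⟩ := Fintype.exists_pair_of_one_lt_card hA
  have hmarker : marker a b w₀ (w₀.length + k + 2) ≠ [] := by simp [marker]
  refine ⟨completion X (marker a b w₀ (w₀.length + k + 2)), Set.subset_union_left,
    isCode_completion (unbordered_marker hab (by omega))
      (fun w hw h => hXw₀ w hw (infix_marker.trans h)) hcode,
    isComplete_completion hmarker, completion_marker_independent hab (by omega) hXw₀ hind,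
    isRegular_completion hreg⟩

/-- every regular `F̲_k`-independent code embeds in a complete
(`F̲_k`-independent, regular) code. -/
theorem stmt_15 {A : Type*} [Fintype A] (hA : 2 ≤ Fintype.card A)
    (k : ℕ) (hk : 1 ≤ k) (X : Set (List A))
    (hreg : IsRegularLang X) (hcode : IsCode X)
    (hind : ¬ ∃ x ∈ X, ∃ y ∈ X, x ≠ y ∧ dF x y ≤ k) :
    ∃ Z : Set (List A), X ⊆ Z ∧ IsCode Z ∧ IsCompleteSet Z ∧
      (¬ ∃ x ∈ Z, ∃ y ∈ Z, x ≠ y ∧ dF x y ≤ k) ∧ IsRegularLang Z :=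
  stmt_15_general hA k X hreg hcode hind
end
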